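/- Let B_n = K[H₁,…,H_n][z₁^{±1},…,z_n^{±1}; σ₁,…,σ_n] with σ_i(H_j) = H_j − δ_{ij}. For p₁,…,p_n ∈ K[z₁^{±1},…,z_n^{±1}], the elements H₁+p₁, …, H_n+p_n of B_n pairwise commute if and only if z_i ∂p_j/∂z_i = z_j ∂p_i/∂z_j for all i ≠ j. -/

import Mathlib

/-!
The Laurent polynomials embed into `B` via `q ↦ q(z)`: the embedding is injective because the
monomials `z^α` are basis vectors. Since `z_k` conjugates `H_j` to `H_j - δ_{jk}`, the inner
derivation `⁅H_j, -⁆` multiplies `z^α` by `α_j`, so `⁅H_j, q(z)⁆ = (z_j ∂q/∂z_j)(z)`. The `H`'s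
commute among themselves and so do Laurent polynomials, hence
`⁅H_i + p_i, H_j + p_j⁆ = (z_i ∂p_j/∂z_i - z_j ∂p_i/∂z_j)(z)`, which vanishes iff its argument does.
-/

/-- The Laurent polynomial algebra `L_n = K[z₁^{±1},…,z_n^{±1}]`, modelled as finitely supported
functions on the monomial exponents `ℤ^n`. -/
abbrev Laur (K : Type*) [Field K] (n : ℕ) := (Fin n → ℤ) →₀ K

/-- The `K`-linear operator `z_i ∂/∂z_i` on `L_n`, acting on the monomial `z^α` by `α_i z^α`. -/
noncomputable def Dz (K : Type*) [Field K] (n : ℕ) (i : Fin n) : Laur K n →ₗ[K] Laur K n :=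
  Finsupp.lsum K fun α => LinearMap.toSpanSingleton K (Laur K n) (Finsupp.single α ((α i : K)))

section RingBracket

variable {B : Type*} [Ring B] {x : B}

theorem lie_mul_eq_add_mul {a b c d : B} (ha : ⁅x, a⁆ = c * a) (hb : ⁅x, b⁆ = d * b)
    (had : Commute a d) : ⁅x, a * b⁆ = (c + d) * (a * b) := by
  calc ⁅x, a * b⁆ = ⁅x, a⁆ * b + a * ⁅x, b⁆ := by simp only [Ring.lie_def]; noncomm_ring
    _ = (c + d) * (a * b) := by rw [ha, hb, ← mul_assoc a, had.eq]; noncomm_ring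

theorem lie_units_inv {u : Bˣ} {c : B} (hu : ⁅x, (u : B)⁆ = c * u) (hc : Commute c ↑u⁻¹) :
    ⁅x, (↑u⁻¹ : B)⁆ = -c * ↑u⁻¹ := by
  calc ⁅x, (↑u⁻¹ : B)⁆ = -(↑u⁻¹ * ⁅x, (u : B)⁆ * ↑u⁻¹) := by
        simp only [Ring.lie_def, mul_sub, sub_mul, mul_assoc, Units.mul_inv, mul_one]
        simp only [← mul_assoc, Units.inv_mul, one_mul, neg_sub]
    _ = -c * ↑u⁻¹ := by rw [hu, ← mul_assoc, ← hc.eq, mul_assoc, Units.mul_inv, mul_one, neg_mul]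

theorem lie_units_zpow {u : Bˣ} {c : B} (hu : ⁅x, (u : B)⁆ = c * u) (hc : Commute c u) (m : ℤ) :
    ⁅x, ((u ^ m : Bˣ) : B)⁆ = (m • c) * ↑(u ^ m) := by
  induction m using Int.induction_on with
  | zero => simp [Ring.lie_def]
  | succ k ih =>
    rw [zpow_add_one, Units.val_mul, lie_mul_eq_add_mul ih hu (hc.units_zpow_right _).symm,
      add_smul, one_smul]
  | pred k ih =>
    rw [zpow_sub_one, Units.val_mul, lie_mul_eq_add_mul ih (lie_units_inv hu hc.units_inv_right)
      (hc.units_zpow_right _).symm.neg_right, sub_smul, one_smul, sub_eq_add_neg]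

theorem lie_prod_ofFn {n : ℕ} {a c : Fin n → B} (ha : ∀ k, ⁅x, a k⁆ = c k * a k)
    (hc : ∀ k l, Commute (a k) (c l)) : ⁅x, (List.ofFn a).prod⁆ = (∑ k, c k) * (List.ofFn a).prod := by
  induction n with
  | zero => simp [Ring.lie_def]
  | succ n ih =>
    rw [List.ofFn_succ, List.prod_cons, Fin.sum_univ_succ]
    exact lie_mul_eq_add_mul (ha 0) (ih (fun k => ha k.succ) (fun k l => hc k.succ l.succ))
      (Commute.sum_right _ _ _ fun l _ => hc 0 l.succ)

theorem lie_add_add_of_commute {a b c d : B} (hab : Commute a b) (hcd : Commute c d) :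
    ⁅a + c, b + d⁆ = ⁅a, d⁆ - ⁅b, c⁆ :=
  calc ⁅a + c, b + d⁆ = ⁅a, b⁆ + ⁅c, d⁆ + ⁅a, d⁆ - ⁅b, c⁆ := by
        simp only [Ring.lie_def]; noncomm_ring
    _ = ⁅a, d⁆ - ⁅b, c⁆ := by rw [hab.lie_eq, hcd.lie_eq]; abel

end RingBracket

section LaurentMonomial

attribute [local instance] LieRing.ofAssociativeRing

variable {K B : Type*} [Field K] [Ring B] [Algebra K B] {n : ℕ} {z : Fin n → Bˣ}

def laurentMonomial (z : Fin n → Bˣ) (α : Fin n → ℤ) : B :=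
  (List.ofFn fun k => ((z k ^ α k : Bˣ) : B)).prod

theorem lie_laurentMonomial {h : Fin n → B}
    (hzh : ∀ i j, (z i : B) * h j = (h j - if i = j then 1 else 0) * (z i : B))
    (j : Fin n) (α : Fin n → ℤ) : ⁅h j, laurentMonomial z α⁆ = (α j : B) * laurentMonomial z α := by
  have hcentral : ∀ k (y : B), Commute (if k = j then (1 : B) else 0) y := by
    intro k y; split_ifs
    · exact Commute.one_left y
    · exact Commute.zero_left y
  have hz : ∀ k, ⁅h j, (z k : B)⁆ = (if k = j then 1 else 0) * z k := fun k => by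
    rw [Ring.lie_def, hzh]; noncomm_ring
  have := lie_prod_ofFn (x := h j) (c := fun k => α k • if k = j then (1 : B) else 0)
    (fun k => lie_units_zpow (hz k) (hcentral k _) (α k))
    (fun k l => ((hcentral l _).smul_left _).symm)
  simpa [laurentMonomial] using this

theorem Dz_single (i : Fin n) (α : Fin n → ℤ) (a : K) :
    Dz K n i (Finsupp.single α a) = Finsupp.single α (a * α i) := by
  simp only [Dz, Finsupp.lsum_single, LinearMap.toSpanSingleton_apply, Finsupp.smul_single,
    smul_eq_mul]

theorem lie_linearCombination_laurentMonomial {h : Fin n → B}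
    (hzh : ∀ i j, (z i : B) * h j = (h j - if i = j then 1 else 0) * (z i : B))
    (j : Fin n) (q : Laur K n) :
    ⁅h j, Finsupp.linearCombination K (laurentMonomial z) q⁆ =
      Finsupp.linearCombination K (laurentMonomial z) (Dz K n j q) := by
  have : (LieAlgebra.ad K B (h j) : B →ₗ[K] B) ∘ₗ Finsupp.linearCombination K (laurentMonomial z) =
      Finsupp.linearCombination K (laurentMonomial z) ∘ₗ Dz K n j := by
    refine Finsupp.lhom_ext fun α a => ?_
    simp only [LinearMap.comp_apply, Dz_single, Finsupp.linearCombination_single,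
      LieAlgebra.ad_apply, lie_smul, lie_laurentMonomial hzh, mul_smul,
      Int.cast_smul_eq_zsmul, zsmul_eq_mul]
  exact LinearMap.congr_fun this q

theorem commute_laurentMonomial (hzz : ∀ i j, Commute (z i : B) (z j)) (α β : Fin n → ℤ) :
    Commute (laurentMonomial z α) (laurentMonomial z β) :=
  Commute.list_prod_left _ _ fun _ hx => Commute.list_prod_right _ _ fun _ hy => by
    obtain ⟨i, rfl⟩ := List.mem_ofFn.mp hx
    obtain ⟨j, rfl⟩ := List.mem_ofFn.mp hy
    exact ((hzz i j).units_zpow_left _).units_zpow_right _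

theorem commute_linearCombination_laurentMonomial (hzz : ∀ i j, Commute (z i : B) (z j))
    (q q' : Laur K n) :
    Commute (Finsupp.linearCombination K (laurentMonomial z) q)
      (Finsupp.linearCombination K (laurentMonomial z) q') := by
  simp only [Finsupp.linearCombination_apply, Finsupp.sum]
  exact Commute.sum_left _ _ _ fun α _ => Commute.sum_right _ _ _ fun β _ =>
    ((commute_laurentMonomial hzz α β).smul_left _).smul_right _

theorem linearIndependent_laurentMonomial {ι : Type*} (b : Module.Basis ι K B)
    (f : (Fin n → ℤ) → ι) (hf : f.Injective) (hb : ∀ α, b (f α) = laurentMonomial z α) :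
    LinearIndependent K (laurentMonomial z : (Fin n → ℤ) → B) := by
  have : (laurentMonomial z : (Fin n → ℤ) → B) = b ∘ f := funext fun α => (hb α).symm
  exact this ▸ b.linearIndependent.comp f hf

end LaurentMonomial

theorem commute_H_add_p_general (K B : Type*) [Field K] [Ring B] [Algebra K B] (n : ℕ)
    (h : Fin n → B) (z : Fin n → Bˣ)
    (hzh : ∀ i j, (z i : B) * h j = (h j - if i = j then 1 else 0) * (z i : B))
    (hzz : ∀ i j, Commute ((z i : B)) ((z j : B)))
    (hhh : ∀ i j, Commute (h i) (h j))
    (b : Module.Basis ((Fin n → ℕ) × (Fin n → ℤ)) K B)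
    (hb : ∀ (m : Fin n → ℕ) (α : Fin n → ℤ),
      b (m, α) = (List.ofFn fun i => h i ^ m i).prod * (List.ofFn fun i => ((z i ^ α i : Bˣ) : B)).prod)
    (p : Fin n → Laur K n) :
    (∀ i j, Commute
        (h i + (p i).sum fun α a => a • (List.ofFn fun k => ((z k ^ α k : Bˣ) : B)).prod)
        (h j + (p j).sum fun α a => a • (List.ofFn fun k => ((z k ^ α k : Bˣ) : B)).prod)) ↔
      (∀ i j, i ≠ j → Dz K n i (p j) = Dz K n j (p i)) := by
  set Φ := Finsupp.linearCombination K (laurentMonomial z : (Fin n → ℤ) → B)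
  have hp : ∀ i, ((p i).sum fun α a => a • (List.ofFn fun k => ((z k ^ α k : Bˣ) : B)).prod) =
      Φ (p i) := fun i => (Finsupp.linearCombination_apply K (p i)).symm
  have hΦ : Function.Injective Φ :=
    linearIndependent_laurentMonomial b (Prod.mk 0) (Prod.mk_right_injective 0) fun α => by
      simp [hb, laurentMonomial]
  have hlie : ∀ i j, ⁅h i + Φ (p i), h j + Φ (p j)⁆ = Φ (Dz K n i (p j) - Dz K n j (p i)) :=
    fun i j => by
      rw [lie_add_add_of_commute (hhh i j) (commute_linearCombination_laurentMonomial hzz _ _),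
        lie_linearCombination_laurentMonomial hzh, lie_linearCombination_laurentMonomial hzh, map_sub]
  simp_rw [hp, commute_iff_lie_eq, hlie, map_eq_zero_iff Φ hΦ, sub_eq_zero]
  exact ⟨fun H i j _ => H i j, fun H i j => (eq_or_ne i j).elim (fun hij => hij ▸ rfl) (H i j)⟩

/-- In `B_n = K[H₁,…,H_n][z₁^{±1},…,z_n^{±1}; σ₁,…,σ_n]` with `σ_i(H_j) = H_j − δ_{ij}`
(axiomatised by generators, relations and a monomial basis), the elements
`H₁+p₁, …, H_n+p_n` (with `p_i` Laurent polynomials in the `z`'s) pairwise commute iff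
`z_i ∂p_j/∂z_i = z_j ∂p_i/∂z_j` for all `i ≠ j`. -/
theorem commute_H_add_p (K B : Type*) [Field K] [CharZero K] [Ring B] [Algebra K B] (n : ℕ)
    (h : Fin n → B) (z : Fin n → Bˣ)
    (hzh : ∀ i j, (z i : B) * h j = (h j - if i = j then 1 else 0) * (z i : B))
    (hzz : ∀ i j, Commute ((z i : B)) ((z j : B)))
    (hhh : ∀ i j, Commute (h i) (h j))
    (b : Module.Basis ((Fin n → ℕ) × (Fin n → ℤ)) K B)
    (hb : ∀ (m : Fin n → ℕ) (α : Fin n → ℤ),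
      b (m, α) = (List.ofFn fun i => h i ^ m i).prod * (List.ofFn fun i => ((z i ^ α i : Bˣ) : B)).prod)
    (p : Fin n → Laur K n) :
    (∀ i j, Commute
        (h i + (p i).sum fun α a => a • (List.ofFn fun k => ((z k ^ α k : Bˣ) : B)).prod)
        (h j + (p j).sum fun α a => a • (List.ofFn fun k => ((z k ^ α k : Bˣ) : B)).prod)) ↔
      (∀ i j, i ≠ j → Dz K n i (p j) = Dz K n j (p i)) :=
  commute_H_add_p_general K B n h z hzh hzz hhh b hb p
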